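/- arXiv:2001.04373 — 6 statements merged into one kernel-verified Lean document; each statement's English description precedes it below -/
import Mathlib

section
/- Let p : ℝ⁺ → ℝ⁺ be continuous, positive, and convex with p strictly increasing, and let P(ρ) = ρ ∫_{ρ₀}^{ρ} p(r)/r² dr be the pressure potential. Then for all ρ₋ ≠ ρ₊ with ρ₋, ρ₊ > 0, the inequality p(ρ₋) + p(ρ₊) − 2(ρ₋ P(ρ₊) − ρ₊ P(ρ₋))/(ρ₊ − ρ₋) > 0 holds. -/
/-!
For `a < b`, the numerator `a P(b) - b P(a)` equals `a b ∫_a^b p(r)/r² dr`, independently of the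
base point `ρ₀`. On `[a, b]` the convex `p` lies below its chord `c + β r`, whose weighted integral
is explicit: `a b ∫_a^b (c + β r)/r² dr = c (b - a) + β a b log(b/a)`. The strict inequality
`2 a b log(b/a) < b² - a²` (that is, `log t < sinh (log t)` for `t = b/a > 1`) together with `β > 0`
then gives the claim. When `p(r)/r²` is not integrable from `ρ₀`, both potentials are `0` by the
junk value of the integral and the claim reduces to `p > 0`.
-/

open Set MeasureTheory intervalIntegral
open scoped Interval

theorem two_mul_mul_log_div_lt_sq_sub_sq {a b : ℝ} (ha : 0 < a) (hab : a < b) :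
    2 * a * b * Real.log (b / a) < b ^ 2 - a ^ 2 := by
  have hb : 0 < b := ha.trans hab
  have hlog : 0 < Real.log (b / a) := Real.log_pos ((one_lt_div ha).2 hab)
  have hsinh := Real.self_lt_sinh_iff.2 hlog
  rw [Real.sinh_eq, Real.exp_neg, Real.exp_log (by positivity), inv_div] at hsinh
  have hsinh' : (b / a - a / b) / 2 = (b ^ 2 - a ^ 2) / (2 * a * b) := by field_simp
  rw [hsinh', lt_div_iff₀ (by positivity)] at hsinh
  linarith

theorem ConvexOn.le_secant {p : ℝ → ℝ} {a b x : ℝ} (hp : ConvexOn ℝ (Icc a b) p)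
    (hx : x ∈ Icc a b) : p x ≤ p a + (p b - p a) / (b - a) * (x - a) := by
  rcases hx.1.eq_or_lt with rfl | hax
  · simp
  have hslope := hp.secant_mono (left_mem_Icc.2 (hax.le.trans hx.2)) hx
    (right_mem_Icc.2 (hax.le.trans hx.2)) hax.ne' (hax.trans_le hx.2).ne' hx.2
  rw [div_le_iff₀ (sub_pos.2 hax)] at hslope
  linarith

theorem intervalIntegrable_div_sq {p : ℝ → ℝ} {a b : ℝ} (ha : 0 < a) (hb : 0 < b)
    (hp : ContinuousOn p [[a, b]]) : IntervalIntegrable (fun x => p x / x ^ 2) volume a b :=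
  (hp.div (continuousOn_pow 2) fun x hx => by
    have := (lt_min ha hb).trans_le hx.1; positivity).intervalIntegrable

theorem integral_affine_div_sq {a b : ℝ} (ha : 0 < a) (hb : 0 < b) (c β : ℝ) :
    ∫ x in a..b, (c + β * x) / x ^ 2 = c * (a⁻¹ - b⁻¹) + β * Real.log (b / a) := by
  have hpos : ∀ x ∈ [[a, b]], 0 < x := fun x hx => (lt_min ha hb).trans_le hx.1
  have hderiv : ∀ x ∈ [[a, b]],
      HasDerivAt (fun x => -c * x⁻¹ + β * Real.log x) ((c + β * x) / x ^ 2) x := by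
    intro x hx
    have hx0 := (hpos x hx).ne'
    refine (((hasDerivAt_inv hx0).const_mul (-c)).fun_add
      ((Real.hasDerivAt_log hx0).const_mul β)).congr_deriv ?_
    field_simp
  rw [integral_eq_sub_of_hasDerivAt hderiv
    (intervalIntegrable_div_sq ha hb (by fun_prop)), Real.log_div hb.ne' ha.ne']
  ring

theorem two_mul_mul_integral_affine_div_sq_lt {a b : ℝ} (ha : 0 < a) (hab : a < b) (c : ℝ)
    {β : ℝ} (hβ : 0 < β) :
    2 * (a * b * ∫ x in a..b, (c + β * x) / x ^ 2) < ((c + β * a) + (c + β * b)) * (b - a) := by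
  have hb : 0 < b := ha.trans hab
  rw [integral_affine_div_sq ha hb]
  calc 2 * (a * b * (c * (a⁻¹ - b⁻¹) + β * Real.log (b / a)))
      = 2 * c * (b - a) + β * (2 * a * b * Real.log (b / a)) := by field_simp
    _ < 2 * c * (b - a) + β * (b ^ 2 - a ^ 2) := by
      gcongr; exact two_mul_mul_log_div_lt_sq_sub_sq ha hab
    _ = ((c + β * a) + (c + β * b)) * (b - a) := by ring

theorem two_mul_mul_integral_div_sq_lt {p : ℝ → ℝ} {a b : ℝ} (ha : 0 < a) (hab : a < b)
    (hconv : ConvexOn ℝ (Icc a b) p) (hint : IntervalIntegrable (fun x => p x / x ^ 2) volume a b)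
    (hlt : p a < p b) :
    2 * (a * b * ∫ x in a..b, p x / x ^ 2) < (p a + p b) * (b - a) := by
  have hb : 0 < b := ha.trans hab
  set β := (p b - p a) / (b - a)
  have hβ_pos : 0 < β := div_pos (sub_pos.2 hlt) (sub_pos.2 hab)
  have hchord : ∀ x ∈ Icc a b, p x / x ^ 2 ≤ (p a - β * a + β * x) / x ^ 2 := by
    intro x hx
    gcongr
    linarith [hconv.le_secant hx]
  calc 2 * (a * b * ∫ x in a..b, p x / x ^ 2)
      ≤ 2 * (a * b * ∫ x in a..b, (p a - β * a + β * x) / x ^ 2) := by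
        gcongr
        exact integral_mono_on hab.le hint
          (intervalIntegrable_div_sq ha hb (by fun_prop)) hchord
    _ < ((p a - β * a + β * a) + (p a - β * a + β * b)) * (b - a) :=
        two_mul_mul_integral_affine_div_sq_lt ha hab _ hβ_pos
    _ = (p a + p b) * (b - a) := by
        have hβ_mul : β * (b - a) = p b - p a := div_mul_cancel₀ _ (sub_pos.2 hab).ne'
        linear_combination (b - a) * hβ_mul

theorem mul_mul_integral_sub_mul_mul_integral {f : ℝ → ℝ} {ρ₀ a b : ℝ}
    (ha : IntervalIntegrable f volume ρ₀ a) (hab : IntervalIntegrable f volume a b) :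
    a * (b * ∫ r in ρ₀..b, f r) - b * (a * ∫ r in ρ₀..a, f r) = a * b * ∫ r in a..b, f r := by
  rw [← integral_interval_sub_left (ha.trans hab) ha]
  ring

theorem stmt5_general (p : ℝ → ℝ) (ρ₀ : ℝ)
    (hcont : ContinuousOn p (Set.Ioi 0))
    (hpos : ∀ ρ > (0 : ℝ), 0 < p ρ)
    (hconv : ConvexOn ℝ (Set.Ioi 0) p)
    (hmono : StrictMonoOn p (Set.Ioi 0))
    (P : ℝ → ℝ) (hP : ∀ ρ, P ρ = ρ * ∫ r in ρ₀..ρ, p r / r ^ 2) :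
    ∀ ρm ρp : ℝ, 0 < ρm → 0 < ρp → ρm ≠ ρp →
      0 < p ρm + p ρp - 2 * (ρm * P ρp - ρp * P ρm) / (ρp - ρm) := by
  intro a b ha hb hne
  wlog hab : a < b generalizing a b
  · have hba := this b a hb ha hne.symm (hne.symm.lt_of_le (not_lt.1 hab))
    rwa [← neg_sub b a, div_neg, ← neg_div, ← mul_neg, neg_sub, add_comm (p b)] at hba
  have hint : IntervalIntegrable (fun r => p r / r ^ 2) volume a b :=
    intervalIntegrable_div_sq ha hb (hcont.mono fun x hx => (lt_min ha hb).trans_le hx.1)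
  rw [hP, hP]
  by_cases hρ₀ : IntervalIntegrable (fun r => p r / r ^ 2) volume ρ₀ a
  · rw [mul_mul_integral_sub_mul_mul_integral hρ₀ hint, sub_pos, div_lt_iff₀ (sub_pos.2 hab)]
    exact two_mul_mul_integral_div_sq_lt ha hab (hconv.subset (fun x hx => ha.trans_le hx.1)
      (convex_Icc a b)) hint (hmono ha hb hab)
  · rw [integral_undef hρ₀, integral_undef fun h => hρ₀ (h.trans hint.symm)]
    simpa using add_pos (hpos a ha) (hpos b hb)

/-- For a continuous, positive, convex and strictly increasing pressure `p` and
the pressure potential `P(ρ) = ρ ∫_{ρ₀}^ρ p(r)/r² dr`, one has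
`p(ρ₋) + p(ρ₊) - 2 (ρ₋ P(ρ₊) - ρ₊ P(ρ₋))/(ρ₊ - ρ₋) > 0` for `ρ₋ ≠ ρ₊` positive. -/
theorem stmt5 (p : ℝ → ℝ) (ρ₀ : ℝ) (hρ₀ : 0 ≤ ρ₀)
    (hcont : ContinuousOn p (Set.Ioi 0))
    (hpos : ∀ ρ > (0 : ℝ), 0 < p ρ)
    (hconv : ConvexOn ℝ (Set.Ioi 0) p)
    (hmono : StrictMonoOn p (Set.Ioi 0))
    (P : ℝ → ℝ) (hP : ∀ ρ, P ρ = ρ * ∫ r in ρ₀..ρ, p r / r ^ 2) :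
    ∀ ρm ρp : ℝ, 0 < ρm → 0 < ρp → ρm ≠ ρp →
      0 < p ρm + p ρp - 2 * (ρm * P ρp - ρp * P ρm) / (ρp - ρm) :=
  stmt5_general p ρ₀ hcont hpos hconv hmono P hP
end

section
/- Let p : ℝ⁺₀ → ℝ be C¹ with p(0) = 0, p'(ρ) > 0 for all ρ > 0, and p convex. Then for all 0 < ρ₋ < ρ₊, one has ∫_{ρ₋}^{ρ₊} √(p'(r))/r dr < √((ρ₊ − ρ₋)(p(ρ₊) − p(ρ₋))/(ρ₋ ρ₊)). -/
/-!
By Cauchy–Schwarz, `(∫ √p'(r) · r⁻¹ dr)² ≤ ∫ p' · ∫ r⁻² = (p(ρ₊) - p(ρ₋)) (ρ₋⁻¹ - ρ₊⁻¹)`, which is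
the square of the right-hand side. Equality would force `p'(r) r²` to be constant on `[ρ₋, ρ₊]`,
but convexity makes `p'` nondecreasing, so `p'(r) r²` increases strictly. Cauchy–Schwarz is
obtained here by integrating the weighted AM–GM inequality `√(xy) ≤ (t x + t⁻¹ y) / 2`, with the
weight `t` chosen to make the integrated bound sharp.
-/

open Set intervalIntegral

namespace Real

lemma sqrt_mul_le_half_add_mul_inv {x y t : ℝ} (hx : 0 ≤ x) (hy : 0 ≤ y) (ht : 0 < t) :
    √(x * y) ≤ (t * x + t⁻¹ * y) / 2 := by
  rw [sqrt_le_left (by positivity)]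
  nlinarith [sq_nonneg (t * x - t⁻¹ * y), mul_inv_cancel₀ ht.ne']

lemma sqrt_mul_lt_half_add_mul_inv {x y t : ℝ} (hx : 0 ≤ x) (hy : 0 ≤ y) (ht : 0 < t)
    (hne : y ≠ t ^ 2 * x) : √(x * y) < (t * x + t⁻¹ * y) / 2 := by
  have hsub : t * x - t⁻¹ * y ≠ 0 := by
    contrapose! hne
    field_simp at hne
    linarith
  rw [sqrt_lt (by positivity) (by positivity)]
  nlinarith [sq_pos_of_ne_zero hsub, mul_inv_cancel₀ ht.ne']

end Real

lemma integral_sqrt_mul_lt_sqrt_integral_mul {f g : ℝ → ℝ} {a b : ℝ} (hab : a < b)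
    (hf : ContinuousOn f (Icc a b)) (hg : ContinuousOn g (Icc a b))
    (hf0 : ∀ x ∈ Icc a b, 0 ≤ f x) (hg0 : ∀ x ∈ Icc a b, 0 ≤ g x)
    (hlt : ∃ c ∈ Icc a b, ∃ d ∈ Icc a b, f c * g d < f d * g c) :
    ∫ x in a..b, √(f x * g x) < √((∫ x in a..b, f x) * ∫ x in a..b, g x) := by
  obtain ⟨c, hc, d, hd, hcd⟩ := hlt
  have hfg : 0 < f d * g c := (mul_nonneg (hf0 c hc) (hg0 d hd)).trans_lt hcd
  set A := ∫ x in a..b, f x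
  set B := ∫ x in a..b, g x
  have hA : 0 < A := integral_pos hab hf (fun x hx ↦ hf0 x (Ioc_subset_Icc_self hx))
    ⟨d, hd, (hf0 d hd).lt_of_ne fun h ↦ by simp [← h] at hfg⟩
  have hB : 0 < B := integral_pos hab hg (fun x hx ↦ hg0 x (Ioc_subset_Icc_self hx))
    ⟨c, hc, (hg0 c hc).lt_of_ne fun h ↦ by simp [← h] at hfg⟩
  set t := √B / √A with ht_def
  have ht : 0 < t := div_pos (Real.sqrt_pos.2 hB) (Real.sqrt_pos.2 hA)
  have hstrict : ∃ x ∈ Icc a b, g x ≠ t ^ 2 * f x := by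
    by_contra! h
    rw [h c hc, h d hd] at hcd
    exact hcd.ne (by ring)
  obtain ⟨x, hx, hgx⟩ := hstrict
  calc ∫ x in a..b, √(f x * g x)
      < ∫ x in a..b, (t * f x + t⁻¹ * g x) / 2 :=
        integral_lt_integral_of_continuousOn_of_le_of_exists_lt hab (hf.mul hg).sqrt
          (by fun_prop)
          (fun y hy ↦ Real.sqrt_mul_le_half_add_mul_inv (hf0 y (Ioc_subset_Icc_self hy))
            (hg0 y (Ioc_subset_Icc_self hy)) ht)
          ⟨x, hx, Real.sqrt_mul_lt_half_add_mul_inv (hf0 x hx) (hg0 x hx) ht hgx⟩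
    _ = (t * A + t⁻¹ * B) / 2 := by
        rw [integral_div, integral_add, integral_const_mul, integral_const_mul]
        · exact (hf.intervalIntegrable_of_Icc hab.le).const_mul t
        · exact (hg.intervalIntegrable_of_Icc hab.le).const_mul t⁻¹
    _ = √(A * B) := by
        have hA' := Real.sqrt_pos.2 hA
        have hB' := Real.sqrt_pos.2 hB
        rw [ht_def, Real.sqrt_mul hA.le]
        field_simp
        rw [Real.sq_sqrt hA.le, Real.sq_sqrt hB.le]
        ring

lemma integral_inv_sq {a b : ℝ} (h : (0 : ℝ) ∉ uIcc a b) :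
    ∫ x in a..b, (x ^ 2)⁻¹ = a⁻¹ - b⁻¹ := by
  have := integral_zpow (a := a) (b := b) (n := -2) (Or.inr ⟨by norm_num, h⟩)
  simp only [zpow_neg] at this
  norm_num at this
  rw [this]
  ring

lemma ConvexOn.deriv_le_deriv_of_hasDerivAt {S : Set ℝ} {f f' : ℝ → ℝ} (hf : ConvexOn ℝ S f)
    {x y : ℝ} (hx : x ∈ S) (hy : y ∈ S) (hxy : x < y)
    (hfx : HasDerivAt f (f' x) x) (hfy : HasDerivAt f (f' y) y) : f' x ≤ f' y :=
  (hf.le_slope_of_hasDerivAt hx hy hxy hfx).trans (hf.slope_le_of_hasDerivAt hx hy hxy hfy)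

theorem stmt6_general (p p' : ℝ → ℝ)
    (hderiv : ∀ ρ ∈ Set.Ici (0 : ℝ), HasDerivWithinAt p (p' ρ) (Set.Ici 0) ρ)
    (hcont : ContinuousOn p' (Set.Ici 0))
    (hpos : ∀ ρ > (0 : ℝ), 0 < p' ρ)
    (hconv : ConvexOn ℝ (Set.Ici 0) p) :
    ∀ ρm ρp : ℝ, 0 < ρm → ρm < ρp →
      ∫ r in ρm..ρp, Real.sqrt (p' r) / r <
        Real.sqrt ((ρp - ρm) * (p ρp - p ρm) / (ρm * ρp)) := by
  intro a b ha hab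
  have hb : 0 < b := ha.trans hab
  have hIcc_pos {r : ℝ} (hr : r ∈ Icc a b) : 0 < r := ha.trans_le hr.1
  have huIcc : uIcc a b = Icc a b := uIcc_of_le hab.le
  have hp : ∀ r > 0, HasDerivAt p (p' r) r := fun r hr ↦
    (hderiv r hr.le).hasDerivAt (Ici_mem_nhds hr)
  have hp'_cont : ContinuousOn p' (Icc a b) := hcont.mono fun r hr ↦ (hIcc_pos hr).le
  have hp_ftc : ∫ r in a..b, p' r = p b - p a :=
    integral_eq_sub_of_hasDerivAt (fun r hr ↦ hp r (hIcc_pos (huIcc ▸ hr)))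
      (hp'_cont.intervalIntegrable_of_Icc hab.le)
  have hstrict : p' a * (b ^ 2)⁻¹ < p' b * (a ^ 2)⁻¹ :=
    calc p' a * (b ^ 2)⁻¹ < p' a * (a ^ 2)⁻¹ := by gcongr; exact hpos a ha
      _ ≤ p' b * (a ^ 2)⁻¹ := by
        gcongr
        exact hconv.deriv_le_deriv_of_hasDerivAt ha.le hb.le hab (hp a ha) (hp b hb)
  have hcs := integral_sqrt_mul_lt_sqrt_integral_mul (g := fun r ↦ (r ^ 2)⁻¹) hab hp'_cont
    ((continuousOn_pow 2).inv₀ fun r hr ↦ (pow_pos (hIcc_pos hr) 2).ne')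
    (fun r hr ↦ (hpos r (hIcc_pos hr)).le) (fun r _ ↦ by positivity)
    ⟨a, left_mem_Icc.2 hab.le, b, right_mem_Icc.2 hab.le, hstrict⟩
  rw [hp_ftc, integral_inv_sq fun h ↦ (hIcc_pos (huIcc ▸ h)).ne rfl] at hcs
  convert hcs using 1
  · refine integral_congr fun r hr ↦ ?_
    have := hIcc_pos (huIcc ▸ hr)
    simp only [Real.sqrt_mul (hpos r this).le, Real.sqrt_inv, Real.sqrt_sq this.le, div_eq_mul_inv]
  · congr 1
    field_simp

/-- For a `C¹` pressure `p` on `[0,∞)` with `p(0) = 0`, `p' > 0` on `(0,∞)` and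
`p` convex: for `0 < ρ₋ < ρ₊`,
`∫_{ρ₋}^{ρ₊} √(p'(r))/r dr < √((ρ₊-ρ₋)(p(ρ₊)-p(ρ₋))/(ρ₋ρ₊))`. -/
theorem stmt6 (p p' : ℝ → ℝ) (hp0 : p 0 = 0)
    (hderiv : ∀ ρ ∈ Set.Ici (0 : ℝ), HasDerivWithinAt p (p' ρ) (Set.Ici 0) ρ)
    (hcont : ContinuousOn p' (Set.Ici 0))
    (hpos : ∀ ρ > (0 : ℝ), 0 < p' ρ)
    (hconv : ConvexOn ℝ (Set.Ici 0) p) :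
    ∀ ρm ρp : ℝ, 0 < ρm → ρm < ρp →
      ∫ r in ρm..ρp, Real.sqrt (p' r) / r <
        Real.sqrt ((ρp - ρm) * (p ρp - p ρm) / (ρm * ρp)) :=
  stmt6_general p p' hderiv hcont hpos hconv
end

section
/- Let Λ ⊂ ℝᴹ be a cone, and let {(τᵢ, pᵢ)}_{i=1..N₁} and {(μⱼ, qⱼ)}_{j=1..N₂} be families in ℝ⁺ × ℝᴹ satisfying the H_{N₁}- and H_{N₂}-conditions, with barycenters p = ∑ τᵢ pᵢ and q = ∑ μⱼ qⱼ respectively. If p − q ∈ Λ, then for every σ ∈ (0,1) the combined family {(σ τᵢ, pᵢ)}_{i=1..N₁} ∪ {((1−σ) μⱼ, qⱼ)}_{j=1..N₂} satisfies the H_{N₁+N₂}-condition. -/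
/-- A set `Λ ⊆ ℝᴹ` is a cone if it is nonempty and closed under multiplication
by arbitrary real scalars. -/
def IsCone {M : ℕ} (Λ : Set (Fin M → ℝ)) : Prop :=
  Λ.Nonempty ∧ ∀ p ∈ Λ, ∀ α : ℝ, α • p ∈ Λ

/-- The `H_N`-condition on a family of pairs `(τᵢ, pᵢ)`, defined recursively:
a single pair satisfies it iff its weight is `1`; a family of `N ≥ 2` pairs
satisfies it iff (after relabeling, i.e. permuting) the difference of the first
two points lies in `Λ` and the family obtained by merging the first two pairs
into their weighted combination satisfies the `H_{N-1}`-condition. -/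
inductive HNCond {M : ℕ} (Λ : Set (Fin M → ℝ)) : List (ℝ × (Fin M → ℝ)) → Prop
  | single (p : Fin M → ℝ) : HNCond Λ [(1, p)]
  | perm {l l' : List (ℝ × (Fin M → ℝ))} (hp : l.Perm l') (h : HNCond Λ l') :
      HNCond Λ l
  | step (τ₁ τ₂ : ℝ) (p₁ p₂ : Fin M → ℝ) (rest : List (ℝ × (Fin M → ℝ)))
      (hΛ : p₂ - p₁ ∈ Λ)
      (h : HNCond Λ
        ((τ₁ + τ₂, (τ₁ / (τ₁ + τ₂)) • p₁ + (τ₂ / (τ₁ + τ₂)) • p₂) :: rest)) :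
      HNCond Λ ((τ₁, p₁) :: (τ₂, p₂) :: rest)

lemma key {M : ℕ} {Λ : Set (Fin M → ℝ)} {l : List (ℝ × (Fin M → ℝ))} (h : HNCond Λ l) :
    ∀ σ : ℝ, σ ≠ 0 → (∀ x ∈ l, 0 < x.1) → ∀ t : List (ℝ × (Fin M → ℝ)),
      HNCond Λ ((σ, (l.map fun x => x.1 • x.2).sum) :: t) →
      HNCond Λ ((l.map fun x => (σ * x.1, x.2)) ++ t) := by
  induction h with
  | single p =>
    intro σ hσ _ t ht
    simpa using ht
  | perm hp h' ih =>
    rename_i l l'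
    intro σ hσ hpos t ht
    refine HNCond.perm (List.Perm.append_right t (hp.map _)) ?_
    refine ih σ hσ (fun x hx => hpos x (hp.mem_iff.mpr hx)) t ?_
    rw [List.Perm.sum_eq (hp.map fun x => x.1 • x.2)] at ht
    exact ht
  | step τ₁ τ₂ p₁ p₂ rest hmem h' ih =>
    intro σ hσ hpos t ht
    have hτ₁ : 0 < τ₁ := hpos (τ₁, p₁) (by simp)
    have hτ₂ : 0 < τ₂ := hpos (τ₂, p₂) (by simp)
    have hτ : τ₁ + τ₂ ≠ 0 := by positivity
    simp only [List.map_cons, List.cons_append]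
    refine HNCond.step _ _ _ _ _ hmem ?_
    have h1 : σ * τ₁ + σ * τ₂ = σ * (τ₁ + τ₂) := by ring
    rw [h1, mul_div_mul_left _ _ hσ, mul_div_mul_left _ _ hσ]
    have hpos' : ∀ x ∈ ((τ₁ + τ₂, (τ₁ / (τ₁ + τ₂)) • p₁ + (τ₂ / (τ₁ + τ₂)) • p₂) :: rest),
        0 < x.1 := by
      intro x hx
      rcases List.mem_cons.mp hx with h | h
      · subst h; positivity
      · exact hpos _ (by simp [h])
    have := ih σ hσ hpos' t ?_
    · simpa using this
    · have hsum : ((((τ₁ + τ₂, (τ₁ / (τ₁ + τ₂)) • p₁ + (τ₂ / (τ₁ + τ₂)) • p₂) :: rest)).map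
          fun x => x.1 • x.2).sum
          = (((τ₁, p₁) :: (τ₂, p₂) :: rest).map fun x => x.1 • x.2).sum := by
        simp only [List.map_cons, List.sum_cons]
        rw [← add_assoc]
        congr 1
        rw [smul_add, smul_smul, smul_smul, mul_div_cancel₀ _ hτ, mul_div_cancel₀ _ hτ]
      rw [hsum]
      exact ht

/-- Combining two families satisfying the `H_{N₁}`- and `H_{N₂}`-conditions whose
barycenters differ by an element of `Λ` yields, for every `σ ∈ (0,1)`, a family
satisfying the `H_{N₁+N₂}`-condition. -/
theorem stmt9 (M : ℕ) (Λ : Set (Fin M → ℝ)) (hΛ : IsCone Λ)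
    (l₁ l₂ : List (ℝ × (Fin M → ℝ)))
    (hpos₁ : ∀ x ∈ l₁, 0 < x.1) (hpos₂ : ∀ x ∈ l₂, 0 < x.1)
    (h₁ : HNCond Λ l₁) (h₂ : HNCond Λ l₂)
    (hbary : (l₁.map fun x => x.1 • x.2).sum - (l₂.map fun x => x.1 • x.2).sum ∈ Λ)
    (σ : ℝ) (hσ : σ ∈ Set.Ioo (0 : ℝ) 1) :
    HNCond Λ ((l₁.map fun x => (σ * x.1, x.2)) ++
      l₂.map fun x => ((1 - σ) * x.1, x.2)) := by
  obtain ⟨hσ0, hσ1⟩ := hσ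
  have hσ0' : σ ≠ 0 := ne_of_gt hσ0
  have hσ1' : (1 : ℝ) - σ ≠ 0 := by linarith
  set p := (l₁.map fun x => x.1 • x.2).sum with hp
  set q := (l₂.map fun x => x.1 • x.2).sum with hq
  have h0 : HNCond Λ [(1 - σ, q), (σ, p)] := by
    refine HNCond.step _ _ _ _ [] hbary ?_
    have : (1 : ℝ) - σ + σ = 1 := by ring
    rw [this]
    exact HNCond.single _
  have h1 : HNCond Λ ((l₂.map fun x => ((1 - σ) * x.1, x.2)) ++ [(σ, p)]) :=
    key h₂ (1 - σ) hσ1' hpos₂ [(σ, p)] h0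
  have h2 : HNCond Λ ((σ, p) :: l₂.map fun x => ((1 - σ) * x.1, x.2)) :=
    HNCond.perm (List.perm_append_singleton _ _).symm h1
  exact key h₁ σ hσ0' hpos₁ _ h2
end

section
/- Let Λ ⊂ ℝᴹ be a cone and K ⊂ ℝᴹ. Define U as the set of points p ∈ ℝᴹ such that there exist N ∈ ℕ and pairs (τᵢ, pᵢ) ∈ ℝ⁺ × K for i = 1,…,N satisfying the H_N-condition with barycenter p = ∑ τᵢ pᵢ. Then U equals the Λ-convex hull K^Λ of K, i.e., the smallest Λ-convex set containing K. -/
/-- A set `S` is `Λ`-convex if it contains the segment `[p, q]` whenever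
`p, q ∈ S` with `p - q ∈ Λ`. -/
def LambdaConvex {M : ℕ} (Λ S : Set (Fin M → ℝ)) : Prop :=
  ∀ p ∈ S, ∀ q ∈ S, p - q ∈ Λ → segment ℝ p q ⊆ S

/-- The `Λ`-convex hull of `K`: the smallest `Λ`-convex set containing `K`. -/
def lambdaHull {M : ℕ} (Λ K : Set (Fin M → ℝ)) : Set (Fin M → ℝ) :=
  ⋂₀ {S | K ⊆ S ∧ LambdaConvex Λ S}

-- merged weighted point identity
lemma merge_smul {M : ℕ} (τ₁ τ₂ : ℝ) (p₁ p₂ : Fin M → ℝ) (h : τ₁ + τ₂ ≠ 0) :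
    (τ₁ + τ₂) • ((τ₁ / (τ₁ + τ₂)) • p₁ + (τ₂ / (τ₁ + τ₂)) • p₂)
      = τ₁ • p₁ + τ₂ • p₂ := by
  rw [smul_add, smul_smul, smul_smul, mul_div_cancel₀ _ h, mul_div_cancel₀ _ h]

-- forward direction: barycenter lies in any Λ-convex S containing the points
lemma sum_mem_of_hn {M : ℕ} {Λ S : Set (Fin M → ℝ)} (hS : LambdaConvex Λ S)
    {l : List (ℝ × (Fin M → ℝ))} (hl : HNCond Λ l) :
    (∀ x ∈ l, 0 < x.1 ∧ x.2 ∈ S) → (l.map fun x => x.1 • x.2).sum ∈ S := by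
  induction hl with
  | single p => intro h; simpa using (h (1, p) (by simp)).2
  | perm hp h ih =>
      intro hmem
      rw [List.Perm.sum_eq (hp.map _)]
      exact ih fun x hx => hmem x (hp.symm.subset hx)
  | step τ₁ τ₂ p₁ p₂ rest hΛ h ih =>
      intro hmem
      have h1 := hmem (τ₁, p₁) (by simp)
      have h2 := hmem (τ₂, p₂) (by simp)
      have hpos : (0:ℝ) < τ₁ + τ₂ := add_pos h1.1 h2.1
      have hq : (τ₁ / (τ₁ + τ₂)) • p₁ + (τ₂ / (τ₁ + τ₂)) • p₂ ∈ S := by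
        apply hS p₂ h2.2 p₁ h1.2 hΛ
        refine ⟨τ₂ / (τ₁ + τ₂), τ₁ / (τ₁ + τ₂), ?_, ?_, ?_, ?_⟩
        · exact div_nonneg h2.1.le hpos.le
        · exact div_nonneg h1.1.le hpos.le
        · field_simp
          ring
        · abel
      have := ih (by
        intro x hx
        rcases List.mem_cons.mp hx with rfl | hx
        · exact ⟨hpos, hq⟩
        · exact hmem x (List.mem_cons_of_mem _ (List.mem_cons_of_mem _ hx)))
      rw [List.map_cons, List.sum_cons, merge_smul τ₁ τ₂ p₁ p₂ hpos.ne'] at this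
      simpa [add_assoc] using this

-- contraction lemma
lemma hn_scale_append {M : ℕ} {Λ : Set (Fin M → ℝ)}
    {l : List (ℝ × (Fin M → ℝ))} (hl : HNCond Λ l) :
    ∀ (hpos : ∀ x ∈ l, 0 < x.1) (a : ℝ), a ≠ 0 →
      ∀ L : List (ℝ × (Fin M → ℝ)),
      HNCond Λ ((a, (l.map fun x => x.1 • x.2).sum) :: L) →
      HNCond Λ ((l.map fun x => (a * x.1, x.2)) ++ L) := by
  induction hl with
  | single p => intro _ a ha L h; simpa using h
  | perm hp h ih =>
      intro hpos a ha L hcons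
      refine HNCond.perm (((hp.map _).append_right L)) ?_
      refine ih (fun x hx => hpos x (hp.symm.subset hx)) a ha L ?_
      rwa [← List.Perm.sum_eq (hp.map fun x => x.1 • x.2)]
  | step τ₁ τ₂ p₁ p₂ rest hΛ h ih =>
      intro hpos a ha L hcons
      have h1 : (0:ℝ) < τ₁ := hpos (τ₁, p₁) (by simp)
      have h2 : (0:ℝ) < τ₂ := hpos (τ₂, p₂) (by simp)
      have hsum : (0:ℝ) < τ₁ + τ₂ := add_pos h1 h2
      have hpos' : ∀ x ∈ ((τ₁ + τ₂, (τ₁ / (τ₁ + τ₂)) • p₁ + (τ₂ / (τ₁ + τ₂)) • p₂) :: rest),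
          0 < x.1 := by
        intro x hx
        rcases List.mem_cons.mp hx with rfl | hx
        · exact hsum
        · exact hpos x (List.mem_cons_of_mem _ (List.mem_cons_of_mem _ hx))
      have key := ih hpos' a ha L (by
        rw [show ((((τ₁ + τ₂, (τ₁ / (τ₁ + τ₂)) • p₁ + (τ₂ / (τ₁ + τ₂)) • p₂) :: rest).map
            fun x => x.1 • x.2).sum)
          = (((τ₁, p₁) :: (τ₂, p₂) :: rest).map fun x => x.1 • x.2).sum by
            simp only [List.map_cons, List.sum_cons,
              merge_smul τ₁ τ₂ p₁ p₂ hsum.ne', add_assoc]]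
        exact hcons)
      simp only [List.map_cons, List.cons_append] at key ⊢
      refine HNCond.step (a * τ₁) (a * τ₂) p₁ p₂ _ hΛ ?_
      have e1 : a * τ₁ + a * τ₂ = a * (τ₁ + τ₂) := by ring
      have e2 : a * τ₁ / (a * τ₁ + a * τ₂) = τ₁ / (τ₁ + τ₂) := by
        rw [e1, mul_div_mul_left _ _ ha]
      have e3 : a * τ₂ / (a * τ₁ + a * τ₂) = τ₂ / (τ₁ + τ₂) := by
        rw [e1, mul_div_mul_left _ _ ha]
      rw [e2, e3, e1]
      exact key

/-- The set of barycenters of families of points of `K` satisfying the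
`H_N`-condition equals the `Λ`-convex hull of `K`. -/
theorem stmt10 (M : ℕ) (Λ K : Set (Fin M → ℝ)) (hΛ : IsCone Λ) :
    {p | ∃ l : List (ℝ × (Fin M → ℝ)), HNCond Λ l ∧
        (∀ x ∈ l, 0 < x.1 ∧ x.2 ∈ K) ∧ (l.map fun x => x.1 • x.2).sum = p} =
      lambdaHull Λ K := by
  apply Set.Subset.antisymm
  · rintro p ⟨l, hl, hmem, rfl⟩ S ⟨hKS, hSconv⟩
    exact sum_mem_of_hn hSconv hl fun x hx => ⟨(hmem x hx).1, hKS (hmem x hx).2⟩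
  · apply Set.sInter_subset_of_mem
    constructor
    · intro p hp
      exact ⟨[(1, p)], HNCond.single p, by simp [hp], by simp⟩
    · rintro p ⟨lp, hlp, hlpm, rfl⟩ q ⟨lq, hlq, hlqm, rfl⟩ hpq x hx
      rcases hx with ⟨u, v, hu, hv, huv, rfl⟩
      rcases eq_or_lt_of_le hu with hu0 | hu0
      · have hv1 : v = 1 := by linarith
        subst hv1
        exact ⟨lq, hlq, hlqm, by simp [← hu0]⟩
      rcases eq_or_lt_of_le hv with hv0 | hv0
      · have hu1 : u = 1 := by linarith
        subst hu1
        exact ⟨lp, hlp, hlpm, by simp [← hv0]⟩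
      set P := (lp.map fun x => x.1 • x.2).sum
      set Q := (lq.map fun x => x.1 • x.2).sum
      refine ⟨(lp.map fun x => (u * x.1, x.2)) ++ (lq.map fun x => (v * x.1, x.2)),
        ?_, ?_, ?_⟩
      · apply hn_scale_append hlp (fun x hx => (hlpm x hx).1) u hu0.ne'
        have base : HNCond Λ [(v, Q), (u, P)] := by
          refine HNCond.step v u Q P [] hpq ?_
          have : v + u = 1 := by linarith
          rw [this]
          have : (v / 1) • Q + (u / 1) • P = v • Q + u • P := by norm_num
          rw [this]
          have hperm := HNCond.single (v • Q + u • P) (Λ := Λ)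
          exact hperm
        have := hn_scale_append hlq (fun x hx => (hlqm x hx).1) v hv0.ne' [(u, P)] base
        exact HNCond.perm (List.perm_append_singleton (u, P) _).symm this
      · intro x hx
        rcases List.mem_append.mp hx with hx | hx <;>
          rcases List.mem_map.mp hx with ⟨y, hy, rfl⟩
        · exact ⟨mul_pos hu0 (hlpm y hy).1, (hlpm y hy).2⟩
        · exact ⟨mul_pos hv0 (hlqm y hy).1, (hlqm y hy).2⟩
      · simp only [List.map_append, List.sum_append, List.map_map]
        have hP : ((lp.map fun x => (u * x.1, x.2)).map fun x => x.1 • x.2).sum = u • P := by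
          rw [List.map_map]
          rw [show ((fun x : ℝ × (Fin M → ℝ) => x.1 • x.2) ∘ fun x => (u * x.1, x.2))
              = (fun y : Fin M → ℝ => u • y) ∘ fun x : ℝ × (Fin M → ℝ) => x.1 • x.2 from
              funext fun x => mul_smul u x.1 x.2,
            ← List.map_map, ← List.smul_sum]
        have hQ : ((lq.map fun x => (v * x.1, x.2)).map fun x => x.1 • x.2).sum = v • Q := by
          rw [List.map_map]
          rw [show ((fun x : ℝ × (Fin M → ℝ) => x.1 • x.2) ∘ fun x => (v * x.1, x.2))
              = (fun y : Fin M → ℝ => v • y) ∘ fun x : ℝ × (Fin M → ℝ) => x.1 • x.2 from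
              funext fun x => mul_smul v x.1 x.2,
            ← List.map_map, ← List.smul_sum]
        rw [← List.map_map, ← List.map_map, hP, hQ]
end

section
/- Let Λ ⊂ ℝᴹ be a cone that is complete with respect to K ⊂ ℝᴹ (i.e., p − q ∈ Λ for all p, q ∈ K). Then the Λ-convex hull of K equals the convex hull of K: K^Λ = K^co. -/
open Set

theorem exists_mem_segment_of_mem_segment_of_mem_segment {E : Type*} [AddCommGroup E]
    [Module ℝ E] {p q y z x : E} (hx : x ∈ segment ℝ p z) (hz : z ∈ segment ℝ q y) :
    ∃ a b : ℝ, 0 ≤ a ∧ 0 ≤ b ∧ a + b = 1 ∧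
      x ∈ segment ℝ (a • p + b • y) (a • q + b • y) := by
  obtain ⟨α, β, hα, hβ, hαβ, rfl⟩ := hx
  obtain ⟨γ, δ, hγ, hδ, hγδ, rfl⟩ := hz
  have hsum : (α + β * γ) + β * δ = 1 := by linear_combination β * hγδ + hαβ
  refine ⟨α + β * γ, β * δ, by positivity, by positivity, hsum, ?_⟩
  rcases (show 0 ≤ α + β * γ by positivity).eq_or_lt with hs | hs
  · have hα : α = 0 := by nlinarith [mul_nonneg hβ hγ]
    have hβγ : β * γ = 0 := by linarith
    rw [← hs, zero_smul, zero_smul, zero_add, segment_same]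
    simp only [mem_singleton_iff, smul_add, smul_smul, hα, hβγ, zero_smul, zero_add]
  · refine ⟨α / (α + β * γ), β * γ / (α + β * γ), by positivity, by positivity,
      by field_simp, ?_⟩
    simp only [smul_add, smul_smul]
    match_scalars <;> field_simp

namespace LambdaConvex

variable {M : ℕ} {Λ S K : Set (Fin M → ℝ)}

theorem convexHull_insert_insert_subset (hΛ : ∀ v ∈ Λ, ∀ α : ℝ, α • v ∈ Λ)
    (hS : LambdaConvex Λ S) {p q : Fin M → ℝ} {A : Set (Fin M → ℝ)} (hpq : p - q ∈ Λ)
    (hp : convexHull ℝ (insert p A) ⊆ S) (hq : convexHull ℝ (insert q A) ⊆ S) :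
    convexHull ℝ (insert p (insert q A)) ⊆ S := by
  have hpS : p ∈ S := hp (subset_convexHull ℝ _ (mem_insert p A))
  have hqS : q ∈ S := hq (subset_convexHull ℝ _ (mem_insert q A))
  rcases A.eq_empty_or_nonempty with rfl | hA
  · rw [insert_empty_eq, convexHull_pair]
    exact hS p hpS q hqS hpq
  intro x hx
  rw [convexHull_insert (insert_nonempty q A), convexHull_insert hA] at hx
  obtain ⟨_, rfl, z, hz, hxz⟩ := mem_convexJoin.1 hx
  obtain ⟨_, rfl, y, hy, hzy⟩ := mem_convexJoin.1 hz
  obtain ⟨a, b, ha, hb, hab, hx⟩ := exists_mem_segment_of_mem_segment_of_mem_segment hxz hzy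
  have hmem {r : Fin M → ℝ} (hr : convexHull ℝ (insert r A) ⊆ S) : a • r + b • y ∈ S :=
    hr <| (convex_convexHull ℝ _).segment_subset (subset_convexHull ℝ _ (mem_insert r A))
      (convexHull_mono (subset_insert r A) hy) ⟨a, b, ha, hb, hab, rfl⟩
  refine hS _ (hmem hp) _ (hmem hq) ?_ hx
  rw [add_sub_add_right_eq_sub, ← smul_sub]
  exact hΛ _ hpq a

theorem convexHull_finset_subset (hΛ : ∀ v ∈ Λ, ∀ α : ℝ, α • v ∈ Λ) (hS : LambdaConvex Λ S)
    (hcomp : ∀ p ∈ K, ∀ q ∈ K, p - q ∈ Λ) (hKS : K ⊆ S) (t : Finset (Fin M → ℝ))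
    (htK : ↑t ⊆ K) : convexHull ℝ ↑t ⊆ S := by
  classical
  induction t using Finset.strongInduction with
  | H t ih =>
  rcases t.eq_empty_or_nonempty with rfl | ⟨p, hp⟩
  · simp
  rcases t.eq_singleton_or_nontrivial hp with rfl | ht
  · simpa using hKS (htK (Finset.mem_singleton_self p))
  obtain ⟨q, hq, hqp⟩ := ht.exists_ne p
  have hqu : insert q ((t.erase p).erase q) = t.erase p :=
    Finset.insert_erase (Finset.mem_erase.2 ⟨hqp, hq⟩)
  have hpu : insert p ((t.erase p).erase q) = t.erase q := by
    rw [Finset.erase_right_comm, Finset.insert_erase (Finset.mem_erase.2 ⟨hqp.symm, hp⟩)]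
  have hsub {r : Fin M → ℝ} (hr : r ∈ t) : convexHull ℝ ↑(t.erase r) ⊆ S :=
    ih _ (Finset.erase_ssubset hr) ((Finset.coe_subset.2 (t.erase_subset r)).trans htK)
  have key := convexHull_insert_insert_subset (A := ↑((t.erase p).erase q)) hΛ hS
    (hcomp p (htK hp) q (htK hq))
    (by rw [← Finset.coe_insert, hpu]; exact hsub hq)
    (by rw [← Finset.coe_insert, hqu]; exact hsub hp)
  rwa [← Finset.coe_insert, ← Finset.coe_insert, hqu, Finset.insert_erase hp] at key

theorem convexHull_subset (hΛ : ∀ v ∈ Λ, ∀ α : ℝ, α • v ∈ Λ) (hS : LambdaConvex Λ S)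
    (hcomp : ∀ p ∈ K, ∀ q ∈ K, p - q ∈ Λ) (hKS : K ⊆ S) : convexHull ℝ K ⊆ S := by
  rw [convexHull_eq_union_convexHull_finite_subsets]
  exact iUnion₂_subset fun t htK => convexHull_finset_subset hΛ hS hcomp hKS t htK

end LambdaConvex

theorem Convex.lambdaConvex {M : ℕ} {Λ S : Set (Fin M → ℝ)} (hS : Convex ℝ S) :
    LambdaConvex Λ S :=
  fun _ hp _ hq _ => hS.segment_subset hp hq

theorem lambdaHull_min {M : ℕ} {Λ K S : Set (Fin M → ℝ)} (hKS : K ⊆ S)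
    (hS : LambdaConvex Λ S) : lambdaHull Λ K ⊆ S :=
  sInter_subset_of_mem ⟨hKS, hS⟩

/-- If the cone `Λ` is complete with respect to `K` (i.e. `p - q ∈ Λ` for all
`p, q ∈ K`), then the `Λ`-convex hull of `K` equals its convex hull. -/
theorem stmt12 (M : ℕ) (Λ K : Set (Fin M → ℝ)) (hΛ : IsCone Λ)
    (hcomp : ∀ p ∈ K, ∀ q ∈ K, p - q ∈ Λ) :
    lambdaHull Λ K = convexHull ℝ K := by
  refine (lambdaHull_min (subset_convexHull ℝ K) (convex_convexHull ℝ K).lambdaConvex).antisymm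
    (subset_sInter fun S hS => LambdaConvex.convexHull_subset hΛ.2 hS.2 hcomp hS.1)
end

section
/- Let N ∈ ℕ, (μⱼ, qⱼ) ∈ ℝ⁺ × ℝᴹ for j = 1,…,N with ∑ μⱼ = 1, and let Λ ⊂ ℝᴹ be a cone such that q_{j₁} − q_{j₂} ∈ Λ for all j₁, j₂. Then there exist (τᵢ, pᵢ) ∈ ℝ⁺ × ℝᴹ for i = 1,…,2^{N−1} such that: (a) the family {(τᵢ, pᵢ)} satisfies the H_{2^{N−1}}-condition; (b) each pᵢ equals some qⱼ; and (c) the two families have the same barycenter, ∑_{i=1}^{2^{N−1}} τᵢ pᵢ = ∑_{j=1}^{N} μⱼ qⱼ. -/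
namespace HNCond

variable {M : ℕ} {Λ : Set (Fin M → ℝ)}

noncomputable def mergePair (x y : ℝ × (Fin M → ℝ)) : ℝ × (Fin M → ℝ) :=
  (x.1 + y.1, (x.1 / (x.1 + y.1)) • x.2 + (y.1 / (x.1 + y.1)) • y.2)

theorem of_mergePair {x y : ℝ × (Fin M → ℝ)} {rest : List (ℝ × (Fin M → ℝ))}
    (hxy : y.2 - x.2 ∈ Λ) (h : HNCond Λ (mergePair x y :: rest)) :
    HNCond Λ (x :: y :: rest) :=
  step x.1 y.1 x.2 y.2 rest hxy h

theorem sum_fst_eq_one {l : List (ℝ × (Fin M → ℝ))} (h : HNCond Λ l) :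
    (l.map Prod.fst).sum = 1 := by
  induction h with
  | single p => simp
  | perm hp _ ih => rw [(hp.map _).sum_eq, ih]
  | step τ₁ τ₂ p₁ p₂ rest _ _ ih => simpa [add_assoc] using ih

theorem map_affineMap (f : (Fin M → ℝ) →ᵃ[ℝ] (Fin M → ℝ)) (hf : ∀ v ∈ Λ, f.linear v ∈ Λ)
    {l : List (ℝ × (Fin M → ℝ))} (h : HNCond Λ l) (hpos : ∀ x ∈ l, 0 < x.1) :
    HNCond Λ (l.map (Prod.map id f)) := by
  induction h with
  | single p => exact single (f p)
  | perm hp _ ih => exact perm (hp.map _) (ih fun x hx => hpos x (hp.mem_iff.mpr hx))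
  | step τ₁ τ₂ p₁ p₂ rest hΛ _ ih =>
    have hτ₁ : 0 < τ₁ := hpos (τ₁, p₁) (by simp)
    have hτ₂ : 0 < τ₂ := hpos (τ₂, p₂) (by simp)
    -- positivity keeps `τ₁ + τ₂ ≠ 0`; otherwise `step` merges into the junk point `0`
    have hcombo : f ((τ₁ / (τ₁ + τ₂)) • p₁ + (τ₂ / (τ₁ + τ₂)) • p₂)
        = (τ₁ / (τ₁ + τ₂)) • f p₁ + (τ₂ / (τ₁ + τ₂)) • f p₂ :=
      Convex.combo_affine_apply (by field_simp)
    have hpos' : ∀ x ∈ (τ₁ + τ₂, (τ₁ / (τ₁ + τ₂)) • p₁ + (τ₂ / (τ₁ + τ₂)) • p₂) :: rest,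
        0 < x.1 := by
      rintro x (_ | ⟨_, hx⟩)
      · exact add_pos hτ₁ hτ₂
      · exact hpos x (.tail _ (.tail _ hx))
    refine step _ _ _ _ _ ?_ (by simpa [hcombo] using ih hpos')
    rw [← vsub_eq_sub, ← AffineMap.linearMap_vsub]
    exact hf _ hΛ

theorem append_flatMap_of_append_map_mergePair {α : Type*} (g₁ g₂ : α → ℝ × (Fin M → ℝ)) :
    ∀ {l : List α} {rest : List (ℝ × (Fin M → ℝ))}, (∀ a ∈ l, (g₂ a).2 - (g₁ a).2 ∈ Λ) →
      HNCond Λ (rest ++ l.map fun a => mergePair (g₁ a) (g₂ a)) →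
      HNCond Λ (rest ++ l.flatMap fun a => [g₁ a, g₂ a])
  | [], _, _, h => by simpa using h
  | a :: l, rest, hΛ, h => by
    have hl : HNCond Λ (mergePair (g₁ a) (g₂ a) :: (rest ++ l.flatMap fun a => [g₁ a, g₂ a])) :=
      append_flatMap_of_append_map_mergePair g₁ g₂ (rest := mergePair (g₁ a) (g₂ a) :: rest)
        (fun b hb => hΛ b (List.mem_cons_of_mem a hb))
        (perm List.perm_middle.symm h)
    rw [List.flatMap_cons, List.cons_append, List.cons_append, List.nil_append]
    exact perm (List.perm_middle.trans (List.perm_middle.cons _)) (of_mergePair (hΛ a (by simp)) hl)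

theorem flatMap_split (hΛ : IsCone Λ) {l : List (ℝ × (Fin M → ℝ))} (h : HNCond Λ l)
    (hpos : ∀ x ∈ l, 0 < x.1) (t : ℝ) {z : Fin M → ℝ} (hz : ∀ x ∈ l, z - x.2 ∈ Λ) :
    HNCond Λ (l.flatMap fun x => [((1 - t) * x.1, x.2), (t * x.1, z)]) := by
  have hmap := map_affineMap (AffineMap.homothety z (1 - t))
    (fun v hv => by simpa using hΛ.2 v hv (1 - t)) h hpos
  have hmerge : ∀ x ∈ l, mergePair ((1 - t) * x.1, x.2) (t * x.1, z)
      = Prod.map id (AffineMap.homothety z (1 - t)) x := by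
    intro x hx
    have hx0 : x.1 ≠ 0 := (hpos x hx).ne'
    ext i
    · simp only [mergePair, Prod.map_fst, id_eq]
      ring
    · simp only [mergePair, Pi.add_apply, Pi.smul_apply, smul_eq_mul, Prod.map_snd,
        AffineMap.homothety_apply, vsub_eq_sub, Pi.vadd_apply', Pi.sub_apply, vadd_eq_add]
      field_simp
      ring
  simpa using append_flatMap_of_append_map_mergePair (rest := []) _ _ hz
    (by rwa [List.nil_append, List.map_congr_left hmerge])

end HNCond

theorem List.sum_smul_flatMap_pair {E : Type*} [AddCommGroup E] [Module ℝ E]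
    (l : List (ℝ × E)) (a b : ℝ) (z : E) :
    ((l.flatMap fun x => [(a * x.1, x.2), (b * x.1, z)]).map fun x => x.1 • x.2).sum
      = a • (l.map fun x => x.1 • x.2).sum + (b * (l.map Prod.fst).sum) • z := by
  induction l with
  | nil => simp
  | cons x l ih =>
    simp only [List.flatMap_cons, List.map_append, List.sum_append, List.map_cons,
      List.sum_cons, List.map_nil, List.sum_nil, ih]
    module

theorem exists_hnCond_of_sum_eq_one {M : ℕ} {Λ : Set (Fin M → ℝ)} (hΛ : IsCone Λ) :
    ∀ (n : ℕ) (μ : Fin (n + 1) → ℝ) (q : Fin (n + 1) → (Fin M → ℝ)), (∀ j, 0 < μ j) →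
      ∑ j, μ j = 1 → (∀ j₁ j₂, q j₁ - q j₂ ∈ Λ) →
      ∃ L : List (ℝ × (Fin M → ℝ)), L.length = 2 ^ n ∧ (∀ x ∈ L, 0 < x.1) ∧ HNCond Λ L ∧
        (∀ x ∈ L, ∃ j, x.2 = q j) ∧ (L.map fun x => x.1 • x.2).sum = ∑ j, μ j • q j
  | 0, μ, q, _, hsum, _ =>
    ⟨[(1, q 0)], rfl, by simp, HNCond.single _, by simp, by simp_all⟩
  | n + 1, μ, q, hμ, hsum, hq => by
    set t := μ (Fin.last (n + 1))
    set z := q (Fin.last (n + 1))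
    have hs : 1 - t = ∑ j : Fin (n + 1), μ j.castSucc := by
      rw [← hsum, Fin.sum_univ_castSucc]; ring
    have hs_pos : 0 < 1 - t := hs ▸ Finset.sum_pos (fun j _ => hμ _) Finset.univ_nonempty
    obtain ⟨L, hlen, hpos, hH, hpts, hbar⟩ := exists_hnCond_of_sum_eq_one hΛ n
      (fun j => μ j.castSucc / (1 - t)) (fun j => q j.castSucc)
      (fun j => div_pos (hμ _) hs_pos) (by rw [← Finset.sum_div, ← hs, div_self hs_pos.ne'])
      (fun _ _ => hq _ _)
    refine ⟨L.flatMap fun x => [((1 - t) * x.1, x.2), (t * x.1, z)], ?_, ?_,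
      hH.flatMap_split hΛ hpos t fun x hx => ?_, ?_, ?_⟩
    · simp [List.length_flatMap, hlen, pow_succ]
    · simp only [List.mem_flatMap, List.mem_cons, List.not_mem_nil, or_false]
      rintro x ⟨y, hy, rfl | rfl⟩
      · exact mul_pos hs_pos (hpos y hy)
      · exact mul_pos (hμ _) (hpos y hy)
    · obtain ⟨j, hj⟩ := hpts x hx
      rw [hj]
      exact hq _ _
    · simp only [List.mem_flatMap, List.mem_cons, List.not_mem_nil, or_false]
      rintro x ⟨y, hy, rfl | rfl⟩
      · obtain ⟨j, hj⟩ := hpts y hy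
        exact ⟨j.castSucc, hj⟩
      · exact ⟨Fin.last _, rfl⟩
    · rw [List.sum_smul_flatMap_pair, hbar, hH.sum_fst_eq_one, Finset.smul_sum, mul_one,
        Fin.sum_univ_castSucc (f := fun j => μ j • q j)]
      simp only [smul_smul, mul_div_cancel₀ _ hs_pos.ne']
      rfl

/-- Given a convex combination `∑ μⱼ qⱼ` whose points have pairwise differences
in the cone `Λ`, there is a family of `2^(N-1)` pairs, with points among the
`qⱼ`, satisfying the `H_{2^(N-1)}`-condition and having the same barycenter. -/
theorem stmt13 (M N : ℕ) (Λ : Set (Fin M → ℝ)) (hΛ : IsCone Λ)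
    (μ : Fin N → ℝ) (hμ : ∀ j, 0 < μ j) (hsum : ∑ j, μ j = 1)
    (q : Fin N → (Fin M → ℝ)) (hq : ∀ j₁ j₂, q j₁ - q j₂ ∈ Λ) :
    ∃ (τ : Fin (2 ^ (N - 1)) → ℝ) (p : Fin (2 ^ (N - 1)) → (Fin M → ℝ)),
      (∀ i, 0 < τ i) ∧
      HNCond Λ (List.ofFn fun i => (τ i, p i)) ∧
      (∀ i, ∃ j, p i = q j) ∧
      ∑ i, τ i • p i = ∑ j, μ j • q j := by
  obtain _ | n := N
  · simp at hsum
  obtain ⟨L, hlen, hpos, hH, hpts, hbar⟩ := exists_hnCond_of_sum_eq_one hΛ n μ q hμ hsum hq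
  obtain ⟨f, rfl⟩ : ∃ f : Fin (2 ^ n) → ℝ × (Fin M → ℝ), List.ofFn f = L :=
    ⟨fun i => L[i.cast hlen.symm], by rw [List.ofFn_congr hlen.symm]; exact List.ofFn_getElem⟩
  refine ⟨fun i => (f i).1, fun i => (f i).2, fun i => hpos _ (List.mem_ofFn.mpr ⟨i, rfl⟩), hH,
    fun i => hpts _ (List.mem_ofFn.mpr ⟨i, rfl⟩), ?_⟩
  rw [← hbar, List.map_ofFn, List.sum_ofFn]
  rfl
end
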